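/- arXiv:1103.2417 — 4 statements merged into one kernel-verified Lean document; each statement's English description precedes it below -/
import Mathlib

section
/- Let f be a polynomial with integer coefficients such that f(1) = 1 or f(1) = -1. Let p be a prime number, let a be a nonnegative integer, and let ζ be a primitive (p^a)-th root of unity in the complex numbers. Then f(ζ) ≠ 0. -/
/-! The cyclotomic polynomial `Φ_{p^a}` is the minimal polynomial of `ζ` over `ℤ`, so `f(ζ) = 0`
forces `Φ_{p^a} ∣ f` and hence `Φ_{p^a}(1) ∣ f(1) = ±1`. But `Φ_{p^a}(1)` is `p` for `a ≥ 1` and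
`0` for `a = 0`, never a unit. -/

open Polynomial

theorem IsPrimitiveRoot.cyclotomic_dvd_of_aeval_eq_zero {K : Type*} [Field K] [CharZero K]
    {ζ : K} {n : ℕ} (hζ : IsPrimitiveRoot ζ n) (hn : 0 < n) {f : ℤ[X]} (hf : aeval ζ f = 0) :
    cyclotomic n ℤ ∣ f := by
  rw [cyclotomic_eq_minpoly hζ hn]
  exact minpoly.isIntegrallyClosed_dvd (hζ.isIntegral hn) hf

theorem not_isUnit_eval_one_cyclotomic_prime_pow {p : ℕ} (hp : p.Prime) (a : ℕ) :
    ¬IsUnit ((cyclotomic (p ^ a) ℤ).eval 1) := by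
  have : Fact p.Prime := ⟨hp⟩
  cases a with
  | zero => simp
  | succ k =>
    rw [eval_one_cyclotomic_prime_pow, Int.isUnit_iff_natAbs_eq, Int.natAbs_natCast]
    exact hp.ne_one

/-- If `f : ℤ[t]` satisfies `f(1) = ±1`, `p` is prime, and `ζ ∈ ℂ` is a primitive
`p^a`-th root of unity, then `f(ζ) ≠ 0`. -/
theorem stmt_0 (f : Polynomial ℤ) (hf : f.eval 1 = 1 ∨ f.eval 1 = -1)
    (p : ℕ) (hp : p.Prime) (a : ℕ) (ζ : ℂ) (hζ : IsPrimitiveRoot ζ (p ^ a)) :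
    Polynomial.aeval ζ f ≠ 0 := by
  intro hroot
  have hdvd : (cyclotomic (p ^ a) ℤ).eval 1 ∣ f.eval 1 :=
    eval_dvd (hζ.cyclotomic_dvd_of_aeval_eq_zero (pow_pos hp.pos a) hroot)
  have hunit : IsUnit (f.eval 1) := Int.isUnit_iff.mpr hf
  exact not_isUnit_eval_one_cyclotomic_prime_pow hp a (isUnit_of_dvd_unit hdvd hunit)
end

section
/- Let f be a polynomial with integer coefficients such that f(1) = 1 or f(1) = -1, let p be a prime, let a be a nonnegative integer, and set d = p^a. Then the integer n satisfying n = Π_d(f) = ∏_{k=0}^{d-1} f(e^{2πik/d}) is nonzero and is not divisible by p. In particular, for d a prime power, ℛ_d(f) = |Π_d(f)| is a positive integer. -/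
/-!
For `d = p ^ a` with `a ≥ 1`, every `d`-th root of unity is a power of each primitive one `μ`,
so it is `≡ 1` modulo `μ - 1`; hence, among algebraic integers,
`Π_d(f) ≡ f(1) ^ d` modulo every `μ - 1`. The product of the `1 - μ` is `Φ_d(1) = p`, so `p`
divides `(Π_d(f) - f(1) ^ d) ^ φ(d)` among algebraic integers, hence among rational integers.
Thus `Π_d(f) ≡ (±1) ^ d` modulo `p`.
-/

open Polynomial Finset

theorem Finset.dvd_prod_sub_prod {ι R : Type*} [CommRing R] {s : Finset ι} {c : R}
    {g h : ι → R} (hgh : ∀ i ∈ s, c ∣ g i - h i) : c ∣ ∏ i ∈ s, g i - ∏ i ∈ s, h i := by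
  simp only [← Ideal.mem_span_singleton, ← Ideal.Quotient.eq, map_prod] at hgh ⊢
  exact prod_congr rfl hgh

theorem IsPrimitiveRoot.sub_one_dvd_sub_one {R : Type*} [CommRing R] [IsDomain R] {μ x : R}
    {d : ℕ} [NeZero d] (hμ : IsPrimitiveRoot μ d) (hx : x ^ d = 1) : μ - 1 ∣ x - 1 := by
  obtain ⟨m, -, rfl⟩ := hμ.eq_pow_of_pow_eq_one hx
  simpa using sub_dvd_pow_sub_pow μ 1 m

theorem Polynomial.sub_one_dvd_aeval_sub {S R : Type*} [CommRing S] [CommRing R] [Algebra S R]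
    (f : S[X]) (x : R) : x - 1 ∣ aeval x f - algebraMap S R (f.eval 1) := by
  have := sub_dvd_eval_sub x 1 (f.map (algebraMap S R))
  rwa [eval_map_algebraMap, eval_map_algebraMap, ← map_one (algebraMap S R),
    aeval_algebraMap_apply_eq_algebraMap_eval, map_one] at this

theorem IsPrimitiveRoot.sub_one_dvd_prod_aeval_pow_sub {S R : Type*} [CommRing S] [CommRing R]
    [IsDomain R] [Algebra S R] {μ ζ : R} {d : ℕ} [NeZero d] (hμ : IsPrimitiveRoot μ d)
    (hζ : ζ ^ d = 1) (f : S[X]) :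
    μ - 1 ∣ ∏ k ∈ range d, aeval (ζ ^ k) f - algebraMap S R (f.eval 1) ^ d := by
  rw [pow_eq_prod_const]
  refine dvd_prod_sub_prod fun k _ ↦ (hμ.sub_one_dvd_sub_one ?_).trans (sub_one_dvd_aeval_sub f _)
  rw [← pow_mul, mul_comm, pow_mul, hζ, one_pow]

theorem IsPrimitiveRoot.prod_one_sub_primitiveRoots_prime_pow {R : Type*} [CommRing R]
    [IsDomain R] {p a : ℕ} [Fact p.Prime] {ζ : R} (hζ : IsPrimitiveRoot ζ (p ^ (a + 1))) :
    ∏ μ ∈ primitiveRoots (p ^ (a + 1)) R, (1 - μ) = p := by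
  rw [← eval_one_cyclotomic_prime_pow (R := R) a, cyclotomic_eq_prod_X_sub_primitiveRoots hζ,
    eval_prod]
  simp

theorem IsPrimitiveRoot.prime_dvd_prod_aeval_pow_sub_pow {S R : Type*} [CommRing S] [CommRing R]
    [IsDomain R] [Algebra S R] {p a : ℕ} [Fact p.Prime] {ζ : R}
    (hζ : IsPrimitiveRoot ζ (p ^ (a + 1))) (f : S[X]) :
    (p : R) ∣ (∏ k ∈ range (p ^ (a + 1)), aeval (ζ ^ k) f -
      algebraMap S R (f.eval 1) ^ p ^ (a + 1)) ^ (p ^ (a + 1)).totient := by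
  rw [← hζ.prod_one_sub_primitiveRoots_prime_pow, ← hζ.card_primitiveRoots, ← prod_const]
  refine prod_dvd_prod_of_dvd _ _ fun μ hμ ↦ ?_
  rw [← neg_sub, neg_dvd]
  have : NeZero (p ^ (a + 1)) := ⟨pow_ne_zero _ (Fact.out : p.Prime).ne_zero⟩
  exact ((mem_primitiveRoots (NeZero.pos _)).1 hμ).sub_one_dvd_prod_aeval_pow_sub hζ.pow_eq_one f

theorem Int.dvd_of_intCast_dvd_integralClosure {K : Type*} [Field K] [CharZero K] {s m : ℤ}
    (h : (s : integralClosure ℤ K) ∣ (m : integralClosure ℤ K)) : s ∣ m := by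
  obtain ⟨y, hy⟩ := h
  rcases eq_or_ne s 0 with rfl | hs
  · simp_all
  have hmy : (m : K) = s * y := by simpa using congrArg Subtype.val hy
  have hq : algebraMap ℚ K (m / s) = y := by
    rw [map_div₀, map_intCast, map_intCast, hmy, mul_div_cancel_left₀ _ (by exact_mod_cast hs)]
  obtain ⟨z, hz⟩ : ∃ z : ℤ, (z : ℚ) = m / s := IsIntegrallyClosed.isIntegral_iff.1
    ((isIntegral_algebraMap_iff (algebraMap ℚ K).injective).1 (hq ▸ y.2))
  refine ⟨z, ?_⟩
  rw [← Int.cast_inj (α := ℚ)]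
  push_cast
  rw [hz, mul_div_cancel₀ _ (by exact_mod_cast hs)]

open Complex in
theorem prime_dvd_prod_aeval_exp_sub_eval_one_pow (f : ℤ[X]) {p : ℕ} [Fact p.Prime] (a : ℕ)
    {n : ℤ} (hn : ∏ k ∈ range (p ^ a), aeval (exp (2 * Real.pi * I * k / (p ^ a : ℕ))) f = n) :
    (p : ℤ) ∣ n - f.eval 1 ^ p ^ a := by
  cases a with
  | zero =>
    simp only [pow_zero, range_one, prod_singleton, CharP.cast_eq_zero, mul_zero, zero_div,
      exp_zero, aeval_def, eval₂_at_one, algebraMap_int_eq, eq_intCast, Int.cast_inj] at hn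
    simp [hn]
  | succ a =>
    set d := p ^ (a + 1)
    have hd : 0 < d := pow_pos (Fact.out : p.Prime).pos _
    have hexp := isPrimitiveRoot_exp d hd.ne'
    let ζ : integralClosure ℤ ℂ := ⟨_, hexp.isIntegral hd⟩
    have hζ : IsPrimitiveRoot ζ d := hexp.of_map_of_injective (f := (integralClosure ℤ ℂ).val)
      Subtype.val_injective
    have hprod : ∏ k ∈ range d, aeval (ζ ^ k) f = n := by
      apply Subtype.val_injective
      push_cast
      rw [← hn]
      refine prod_congr rfl fun k _ ↦ congrArg (aeval · f) ?_
      change exp _ ^ k = _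
      rw [← exp_nat_mul]
      ring_nf
    have hdvd := hζ.prime_dvd_prod_aeval_pow_sub_pow f
    rw [hprod, algebraMap_int_eq, eq_intCast, ← Int.cast_pow, ← Int.cast_sub, ← Int.cast_pow,
      ← Int.cast_natCast] at hdvd
    exact (Nat.prime_iff_prime_int.1 Fact.out).dvd_of_dvd_pow
      (Int.dvd_of_intCast_dvd_integralClosure hdvd)

/-- If `f : ℤ[t]` satisfies `f(1) = ±1` and `d = p^a` is a prime power, then the
integer `n` equal to `∏_{k=0}^{d-1} f(e^{2πik/d})` is nonzero and not divisible by `p`.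
In particular `|Π_d(f)|` is a positive integer. -/
theorem stmt_2 (f : Polynomial ℤ) (hf : f.eval 1 = 1 ∨ f.eval 1 = -1)
    (p : ℕ) (hp : p.Prime) (a : ℕ) (d : ℕ) (hd : d = p ^ a) (n : ℤ)
    (hn : (∏ k ∈ Finset.range d,
        Polynomial.aeval (Complex.exp (2 * Real.pi * Complex.I * k / d)) f) = (n : ℂ)) :
    n ≠ 0 ∧ ¬ ((p : ℤ) ∣ n) := by
  subst hd
  have := Fact.mk hp
  have hpZ : Prime (p : ℤ) := Nat.prime_iff_prime_int.1 hp
  have hε : IsUnit (f.eval 1) := by rcases hf with h | h <;> simp [h]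
  have hpε : ¬ (p : ℤ) ∣ f.eval 1 ^ p ^ a := fun h ↦
    hpZ.not_isUnit (isUnit_of_dvd_unit (hpZ.dvd_of_dvd_pow h) hε)
  have hpn : ¬ (p : ℤ) ∣ n := fun h ↦
    hpε (by simpa using dvd_sub h (prime_dvd_prod_aeval_exp_sub_eval_one_pow f a hn))
  exact ⟨by rintro rfl; exact hpn (dvd_zero _), hpn⟩
end

section
/- Let A be the 2×2 integer matrix with rows (-1, 1) and (0, -1) (a Seifert matrix of the trefoil knot). For a real number t with 0 < t < 1, let ω = e^{2πit} and let M(t) = (1 - ω)·A + (1 - \bar{ω})·Aᵀ, regarded as a 2×2 complex matrix (which is Hermitian). Then M(t) is negative definite if and only if 1/6 < t < 5/6. -/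
open Matrix
open scoped ComplexOrder

/-!
Writing `ω = e^{2πit}`, the form `-M(t)` is `!![‖ω - 1‖², ω - 1; ω̄ - 1, ‖ω - 1‖²]`, because
`‖ω - 1‖² = 2 - ω - ω̄` on the unit circle. A Hermitian matrix `!![d, z; z̄, d]` is positive
definite iff `‖z‖ < d`, so `-M(t)` is positive definite iff `1 < ‖ω - 1‖ = 2 sin(πt)`, i.e.
iff `πt` lies strictly between `π/6` and `5π/6`.
-/

open ComplexConjugate

theorem Matrix.posDef_fin_two_iff_norm_lt (d : ℝ) (z : ℂ) :
    (!![(d : ℂ), z; conj z, d]).PosDef ↔ ‖z‖ < d := by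
  constructor
  · intro h
    have hd : 0 < d := by simpa using h.diag_pos (i := 0)
    have hdet : 0 < d ^ 2 - ‖z‖ ^ 2 := by
      have := h.det_pos
      rw [det_fin_two_of, Complex.mul_conj', ← sq] at this
      exact_mod_cast this
    nlinarith [norm_nonneg z]
  · intro h
    refine .of_dotProduct_mulVec_pos ?_ fun x hx => ?_
    · ext i j
      fin_cases i <;> fin_cases j <;> simp
    set p := x 0
    set q := x 1
    have hS : 0 < ‖p‖ ^ 2 + ‖q‖ ^ 2 := by
      by_contra hS
      have hp : p = 0 := by rw [← norm_eq_zero]; nlinarith [norm_nonneg p, norm_nonneg q]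
      have hq : q = 0 := by rw [← norm_eq_zero]; nlinarith [norm_nonneg p, norm_nonneg q]
      exact hx (by ext i; fin_cases i <;> assumption)
    have hform : star x ⬝ᵥ (!![(d : ℂ), z; conj z, d] *ᵥ x)
        = ((d * (‖p‖ ^ 2 + ‖q‖ ^ 2) + 2 * (conj p * z * q).re : ℝ) : ℂ) := by
      push_cast
      rw [Complex.re_eq_add_conj, ← Complex.mul_conj', ← Complex.mul_conj']
      simp only [dotProduct, mulVec, Fin.sum_univ_two, Pi.star_apply, RCLike.star_def, of_apply,
        cons_val', cons_val_zero, cons_val_one, cons_val_fin_one, map_mul, Complex.conj_conj, p, q]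
      ring
    have hre : -(‖p‖ * ‖z‖ * ‖q‖) ≤ (conj p * z * q).re := by
      simpa [norm_mul] using (abs_le.mp (Complex.abs_re_le_norm (conj p * z * q))).1
    rw [hform, Complex.zero_lt_real]
    nlinarith [two_mul_le_add_sq ‖p‖ ‖q‖, norm_nonneg z, mul_nonneg (norm_nonneg p) (norm_nonneg q)]

theorem neg_levineTristram_trefoil {ω : ℂ} (hω : ‖ω‖ = 1) :
    -((1 - ω) • !![(-1 : ℂ), 1; 0, -1] + (1 - conj ω) • (!![(-1 : ℂ), 1; 0, -1])ᵀ)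
      = !![((‖ω - 1‖ ^ 2 : ℝ) : ℂ), ω - 1; conj (ω - 1), ((‖ω - 1‖ ^ 2 : ℝ) : ℂ)] := by
  have hnorm : ((‖ω - 1‖ ^ 2 : ℝ) : ℂ) = 2 - ω - conj ω := by
    have hunit : ω * conj ω = 1 := by simp [Complex.mul_conj', hω]
    push_cast
    rw [← Complex.mul_conj', map_sub, map_one]
    linear_combination hunit
  rw [hnorm]
  ext i j
  fin_cases i <;> fin_cases j <;>
    simp only [Fin.zero_eta, Fin.mk_one, Matrix.neg_apply, Matrix.add_apply, Matrix.smul_apply,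
      transpose_apply, of_apply, cons_val', cons_val_zero, cons_val_one, cons_val_fin_one, smul_eq_mul,
      map_sub, map_one] <;>
    ring

theorem posDef_neg_levineTristram_trefoil_iff {ω : ℂ} (hω : ‖ω‖ = 1) :
    (-((1 - ω) • !![(-1 : ℂ), 1; 0, -1] + (1 - conj ω) • (!![(-1 : ℂ), 1; 0, -1])ᵀ)).PosDef
      ↔ 1 < ‖ω - 1‖ := by
  rw [neg_levineTristram_trefoil hω, posDef_fin_two_iff_norm_lt]
  constructor <;> intro h <;> nlinarith [norm_nonneg (ω - 1)]

open Real in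
theorem Real.half_lt_sin_pi_mul_iff {t : ℝ} (h0 : 0 ≤ t) (h1 : t ≤ 1) :
    1 / 2 < sin (π * t) ↔ 1 / 6 < t ∧ t < 5 / 6 := by
  have hπ := pi_pos
  rw [← cos_sub_pi_div_two, ← cos_abs, ← cos_pi_div_three,
    strictAntiOn_cos.lt_iff_gt ⟨by positivity, by linarith⟩
      ⟨abs_nonneg _, by rw [abs_le]; constructor <;> nlinarith⟩, abs_sub_lt_iff]
  constructor <;> rintro ⟨h, h'⟩ <;> constructor <;> nlinarith

open Real in
theorem one_lt_norm_exp_two_pi_I_mul_sub_one_iff {t : ℝ} (h0 : 0 ≤ t) (h1 : t ≤ 1) :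
    1 < ‖Complex.exp (Complex.I * ↑(2 * π * t)) - 1‖ ↔ 1 / 6 < t ∧ t < 5 / 6 := by
  have hsin : 0 ≤ sin (π * t) := sin_nonneg_of_nonneg_of_le_pi (by positivity) (by nlinarith [pi_pos])
  rw [Complex.norm_exp_I_mul_ofReal_sub_one, show 2 * π * t / 2 = π * t by ring, Real.norm_eq_abs,
    abs_of_nonneg (by linarith), ← half_lt_sin_pi_mul_iff h0 h1]
  constructor <;> intro h <;> linarith

/-- For the trefoil Seifert matrix `A = [[-1,1],[0,-1]]` and `0 < t < 1`,
the Levine–Tristram form `M(t) = (1-ω)A + (1-ω̄)Aᵀ` with `ω = e^{2πit}` is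
negative definite iff `1/6 < t < 5/6`. -/
theorem stmt_6 (t : ℝ) (ht : 0 < t ∧ t < 1)
    (A : Matrix (Fin 2) (Fin 2) ℂ) (hA : A = !![-1, 1; 0, -1])
    (ω : ℂ) (hω : ω = Complex.exp (2 * Real.pi * Complex.I * t))
    (M : Matrix (Fin 2) (Fin 2) ℂ)
    (hM : M = (1 - ω) • A + (1 - starRingEnd ℂ ω) • Aᵀ) :
    (-M).PosDef ↔ (1 / 6 : ℝ) < t ∧ t < 5 / 6 := by
  have hω' : ω = Complex.exp (Complex.I * ↑(2 * Real.pi * t)) := by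
    rw [hω]; congr 1; push_cast; ring
  subst hM hA
  rw [posDef_neg_levineTristram_trefoil_iff (hω' ▸ Complex.norm_exp_I_mul_ofReal _), hω']
  exact one_lt_norm_exp_two_pi_I_mul_sub_one_iff ht.1.le ht.2.le
end

section
/- Let A be the 2×2 integer matrix with rows (-1, 1) and (0, -1) (a Seifert matrix of the trefoil knot). For a real number t with 0 < t < 1/6 or 5/6 < t < 1, let ω = e^{2πit} and M(t) = (1 - ω)·A + (1 - \bar{ω})·Aᵀ. Then the determinant of M(t) is a real number that is strictly negative; consequently M(t) is neither positive semidefinite nor negative semidefinite. -/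
/-!
For `‖ω‖ = 1` and `c = Re ω`, the trefoil form has diagonal entries `-(2 - 2c) = -|1 - ω|²` and
off-diagonal entries `1 - ω`, `1 - ω̄`, so its determinant is `(2 - 2c)² - (2 - 2c) = 2(1 - c)(1 - 2c)`.
For `ω = e^{2πit}` with `t` in the given range, `c = cos 2πt` lies in `(1/2, 1)`, so the determinant
is negative. A positive semidefinite matrix has nonnegative determinant, and `det (-M) = det M`
for `2 × 2` matrices, so neither `M` nor `-M` is positive semidefinite.
-/

open Matrix
open scoped ComplexOrder

def levineTristramForm {n : Type*} (A : Matrix n n ℂ) (ω : ℂ) : Matrix n n ℂ :=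
  (1 - ω) • A + (1 - starRingEnd ℂ ω) • Aᵀ

theorem det_levineTristramForm_trefoil {ω : ℂ} (hω : ‖ω‖ = 1) :
    (levineTristramForm !![-1, 1; 0, -1] ω).det = (2 * (1 - ω.re) * (1 - 2 * ω.re) : ℝ) := by
  have hsq : ω.re * ω.re + ω.im * ω.im = 1 := by
    rw [← Complex.normSq_apply, Complex.normSq_eq_norm_sq, hω, one_pow]
  apply Complex.ext
  · simp [levineTristramForm, det_fin_two]
    linear_combination -hsq
  · simp [levineTristramForm, det_fin_two]
    ring

theorem Real.cos_mem_Ioo_of_mem_Ioo {x : ℝ} (hx : x ∈ Set.Ioo 0 (Real.pi / 3)) :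
    Real.cos x ∈ Set.Ioo (1 / 2) 1 := by
  obtain ⟨h0, h1⟩ := hx
  have hπ := Real.pi_pos
  constructor
  · simpa using Real.cos_lt_cos_of_nonneg_of_le_pi h0.le (by linarith) h1
  · simpa using Real.cos_lt_cos_of_nonneg_of_le_pi le_rfl (by linarith) h0

theorem Real.cos_two_pi_mul_mem_Ioo {t : ℝ} (ht : (0 < t ∧ t < 1 / 6) ∨ (5 / 6 < t ∧ t < 1)) :
    Real.cos (2 * Real.pi * t) ∈ Set.Ioo (1 / 2) 1 := by
  have hπ := Real.pi_pos
  rcases ht with ⟨h0, h1⟩ | ⟨h0, h1⟩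
  · exact Real.cos_mem_Ioo_of_mem_Ioo ⟨by positivity, by nlinarith⟩
  · rw [← Real.cos_two_pi_sub]
    exact Real.cos_mem_Ioo_of_mem_Ioo ⟨by nlinarith, by nlinarith⟩

theorem Matrix.not_posSemidef_of_det_eq_neg {n 𝕜 : Type*} [Fintype n] [DecidableEq n] [RCLike 𝕜]
    {M : Matrix n n 𝕜} {r : ℝ} (hdet : M.det = r) (hr : r < 0) : ¬ M.PosSemidef := by
  intro hM
  have := hM.det_nonneg
  rw [hdet, RCLike.ofReal_nonneg] at this
  linarith

/-- For the trefoil Seifert matrix `A = [[-1,1],[0,-1]]` and `0 < t < 1/6` or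
`5/6 < t < 1`, the Levine–Tristram form `M(t) = (1-ω)A + (1-ω̄)Aᵀ`, `ω = e^{2πit}`,
has real strictly negative determinant; consequently `M(t)` is neither positive
semidefinite nor negative semidefinite. -/
theorem stmt_7 (t : ℝ) (ht : (0 < t ∧ t < 1 / 6) ∨ (5 / 6 < t ∧ t < 1))
    (A : Matrix (Fin 2) (Fin 2) ℂ) (hA : A = !![-1, 1; 0, -1])
    (ω : ℂ) (hω : ω = Complex.exp (2 * Real.pi * Complex.I * t))
    (M : Matrix (Fin 2) (Fin 2) ℂ)
    (hM : M = (1 - ω) • A + (1 - starRingEnd ℂ ω) • Aᵀ) :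
    (∃ r : ℝ, M.det = (r : ℂ) ∧ r < 0) ∧ ¬ M.PosSemidef ∧ ¬ (-M).PosSemidef := by
  set c := Real.cos (2 * Real.pi * t)
  have hω' : ω = Complex.exp ((2 * Real.pi * t : ℝ) * Complex.I) := by
    rw [hω]; push_cast; ring_nf
  have hMform : M = levineTristramForm !![-1, 1; 0, -1] ω := hA ▸ hM
  have hdet : M.det = (2 * (1 - c) * (1 - 2 * c) : ℝ) := by
    rw [hMform, det_levineTristramForm_trefoil (by rw [hω', Complex.norm_exp_ofReal_mul_I]),
      hω', Complex.exp_ofReal_mul_I_re]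
  obtain ⟨hc1, hc2⟩ := Real.cos_two_pi_mul_mem_Ioo ht
  have hr : 2 * (1 - c) * (1 - 2 * c) < 0 := mul_neg_of_pos_of_neg (by linarith) (by linarith)
  have hdet_neg : (-M).det = M.det := by simp [det_neg]
  exact ⟨⟨_, hdet, hr⟩, not_posSemidef_of_det_eq_neg hdet hr,
    not_posSemidef_of_det_eq_neg (hdet_neg.trans hdet) hr⟩
end
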